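/- arXiv:math/0206254 — 4 statements merged into one kernel-verified Lean document; each statement's English description precedes it below -/
import Mathlib

section
/- If H = {H_α}_{α∈π} is a Hopf π-coalgebra over a field k, then the set {α ∈ π | H_α ≠ 0} is a subgroup of π. -/
open TensorProduct

/-- The canonical `k`-linear isomorphism-as-map `H α →ₗ[k] H β` induced by an equality `α = β`. -/
def Lcast (k : Type*) [CommSemiring k] {π : Type*} (H : π → Type*)
    [∀ α, AddCommMonoid (H α)] [∀ α, Module k (H α)] {α β : π} (h : α = β) :
    H α →ₗ[k] H β := by subst h; exact LinearMap.id

/-- A Hopf `π`-coalgebra over a field `k` (Turaev): a family of `k`-algebras `H α`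
with comultiplication `Δ α β : H (α * β) →ₐ[k] H α ⊗[k] H β`, counit `ε : H 1 →ₐ[k] k`
and antipode `S α : H α →ₗ[k] H α⁻¹`, satisfying coassociativity, counit and
antipode axioms. -/
structure HopfGroupCoalgebra (k : Type*) [Field k] (π : Type*) [Group π]
    (H : π → Type*) [∀ α, Ring (H α)] [∀ α, Algebra k (H α)] where
  Δ : ∀ α β : π, H (α * β) →ₐ[k] TensorProduct k (H α) (H β)
  ε : H (1 : π) →ₐ[k] k
  S : ∀ α : π, H α →ₗ[k] H α⁻¹
  coassoc : ∀ (α β γ : π) (x : H (α * β * γ)),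
    (TensorProduct.assoc k (H α) (H β) (H γ))
        (TensorProduct.map (Δ α β).toLinearMap LinearMap.id (Δ (α * β) γ x)) =
      TensorProduct.map LinearMap.id (Δ β γ).toLinearMap
        (Δ α (β * γ) (Lcast k H (mul_assoc α β γ) x))
  counit_right : ∀ (α : π) (x : H (α * 1)),
    (TensorProduct.rid k (H α))
        (TensorProduct.map LinearMap.id ε.toLinearMap (Δ α 1 x)) =
      Lcast k H (mul_one α) x
  counit_left : ∀ (α : π) (x : H (1 * α)),
    (TensorProduct.lid k (H α))
        (TensorProduct.map ε.toLinearMap LinearMap.id (Δ 1 α x)) =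
      Lcast k H (one_mul α) x
  antipode_left : ∀ (α : π) (x : H (α⁻¹ * α)),
    (LinearMap.mul' k (H α))
        (TensorProduct.map ((Lcast k H (inv_inv α)).comp (S α⁻¹)) LinearMap.id (Δ α⁻¹ α x)) =
      ε (Lcast k H (inv_mul_cancel α) x) • (1 : H α)
  antipode_right : ∀ (α : π) (x : H (α * α⁻¹)),
    (LinearMap.mul' k (H α))
        (TensorProduct.map LinearMap.id ((Lcast k H (inv_inv α)).comp (S α⁻¹)) (Δ α α⁻¹ x)) =
      ε (Lcast k H (mul_inv_cancel α) x) • (1 : H α)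

lemma tensor_one_ne_zero (k A B : Type*) [Field k] [Ring A] [Algebra k A]
    [Ring B] [Algebra k B] (hA : (1 : A) ≠ 0) (hB : (1 : B) ≠ 0) :
    (1 : A) ⊗ₜ[k] (1 : B) ≠ 0 := by
  obtain ⟨f, hf⟩ : ∃ f : Module.Dual k A, f 1 ≠ 0 := by
    by_contra hc; push_neg at hc
    exact hA ((Module.forall_dual_apply_eq_zero_iff k (1 : A)).mp hc)
  obtain ⟨g, hg⟩ : ∃ g : Module.Dual k B, g 1 ≠ 0 := by
    by_contra hc; push_neg at hc
    exact hB ((Module.forall_dual_apply_eq_zero_iff k (1 : B)).mp hc)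
  intro h0
  have := congrArg ((TensorProduct.lid k k).toLinearMap ∘ₗ TensorProduct.map f g) h0
  simp only [LinearMap.coe_comp, Function.comp_apply, TensorProduct.map_tmul,
    map_zero, LinearEquiv.coe_coe, TensorProduct.lid_tmul, smul_eq_mul] at this
  exact (mul_ne_zero hf hg) this

lemma Lcast_Lcast (k : Type*) [CommSemiring k] {π : Type*} (H : π → Type*)
    [∀ α, AddCommMonoid (H α)] [∀ α, Module k (H α)] {α β : π} (h : α = β) (x : H β) :
    Lcast k H h (Lcast k H h.symm x) = x := by subst h; rfl

/-- If `H = {H α}` is a Hopf `π`-coalgebra over a field `k`, then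
`{α ∈ π | H α ≠ 0}` is a subgroup of `π`. -/
theorem support_is_subgroup (k : Type*) [Field k] (π : Type*) [Group π]
    (H : π → Type*) [∀ α, Ring (H α)] [∀ α, Algebra k (H α)]
    (Hc : HopfGroupCoalgebra k π H) :
    ∃ G : Subgroup π, ∀ α : π, α ∈ G ↔ Nontrivial (H α) := by
  classical
  refine ⟨{ carrier := {α | Nontrivial (H α)}
            one_mem' := ?_
            mul_mem' := ?_
            inv_mem' := ?_ }, fun α => Iff.rfl⟩
  · -- closed under multiplication
    intro α β hα hβ
    have : Nontrivial (H α) := hα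
    have : Nontrivial (H β) := hβ
    by_contra hab
    have hsub : Subsingleton (H (α * β)) := not_nontrivial_iff_subsingleton.mp hab
    have h10 : (1 : H (α * β)) = 0 := Subsingleton.elim _ _
    have h1 : (1 : TensorProduct k (H α) (H β)) = 0 := by
      calc (1 : TensorProduct k (H α) (H β)) = Hc.Δ α β 1 := (map_one _).symm
        _ = Hc.Δ α β 0 := by rw [h10]
        _ = 0 := map_zero _
    rw [Algebra.TensorProduct.one_def] at h1
    exact tensor_one_ne_zero k (H α) (H β) (one_ne_zero) (one_ne_zero) h1
  · -- H 1 is nontrivial since ε 1 = 1 ≠ 0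
    refine nontrivial_of_ne (1 : H (1 : π)) 0 fun h => ?_
    have : (1 : k) = 0 := by
      calc (1 : k) = Hc.ε 1 := (map_one Hc.ε).symm
        _ = Hc.ε 0 := by rw [h]
        _ = 0 := map_zero Hc.ε
    exact one_ne_zero this
  · -- closed under inverse
    intro α hα
    have hαn : Nontrivial (H α) := hα
    by_contra hinv
    have hsub : Subsingleton (H α⁻¹) := not_nontrivial_iff_subsingleton.mp hinv
    set x : H (α⁻¹ * α) := Lcast k H (inv_mul_cancel α).symm (1 : H (1 : π)) with hx
    have key := Hc.antipode_left α x
    have hΔ0 : Hc.Δ α⁻¹ α x = 0 := Subsingleton.elim _ _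
    rw [hΔ0, map_zero, map_zero] at key
    have hεx : Hc.ε (Lcast k H (inv_mul_cancel α) x) = 1 := by
      rw [hx, Lcast_Lcast, map_one]
    rw [hεx, one_smul] at key
    exact one_ne_zero key.symm
end

section
/- Let π be a finite group and H = {H_α}_{α∈π} a Hopf π-coalgebra over k. Then the direct sum H̃ = ⊕_{α∈π} H_α, with multiplication defined by m̃|_{H_α ⊗ H_β} = δ_{α,β} m_α, unit 1̃ = Σ_α 1_α, comultiplication Δ̃|_{H_α} = Σ_{βγ=α} Δ_{β,γ}, counit ε̃|_{H_α} = δ_{α,1} ε, and antipode S̃ = Σ_α S_α, is a Hopf algebra over k. -/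
/-!
A tensor in `(∏ α, H α) ⊗ (∏ α, H α)` is determined by its blocks
`map (proj β) (proj γ) t ∈ H β ⊗ H γ` (and likewise in the triple tensor product), and these block
projections are algebra maps. The `(β, γ)` block of `Δ̃ a` is `Δ β γ (a (β * γ))`, so each Hopf
algebra axiom of `∏ α, H α`, read off block by block (coordinate by coordinate for the counit and
antipode axioms), is the corresponding axiom of the Hopf `π`-coalgebra: for instance the
`α`-coordinate of `m̃ ∘ (S̃ ⊗ id) ∘ Δ̃` is `m_α ∘ (S α⁻¹ ⊗ id) ∘ Δ α⁻¹ α` applied to `a (α⁻¹ * α)`.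
-/

open TensorProduct

namespace LinearMap

lemma eq_of_sum_comp_eq_id {R M : Type*} [CommSemiring R] [AddCommMonoid M] [Module R M]
    {ι : Type*} [Fintype ι] {N : ι → Type*} [∀ i, AddCommMonoid (N i)] [∀ i, Module R (N i)]
    {p : ∀ i, M →ₗ[R] N i} {s : ∀ i, N i →ₗ[R] M} (h : ∑ i, s i ∘ₗ p i = id)
    {x y : M} (hxy : ∀ i, p i x = p i y) : x = y := by
  rw [← id_apply (R := R) x, ← id_apply (R := R) y, ← h]
  simp only [sum_apply, comp_apply, hxy]

lemma sum_single_comp_proj {R : Type*} [Semiring R] {ι : Type*} [Fintype ι] [DecidableEq ι]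
    (M : ι → Type*) [∀ i, AddCommMonoid (M i)] [∀ i, Module R (M i)] :
    ∑ i, single R M i ∘ₗ proj i = id :=
  LinearMap.ext fun a => by simp [sum_apply, Finset.univ_sum_single]

lemma mul'_pi_apply {R : Type*} [CommSemiring R] {ι : Type*} {A : ι → Type*}
    [∀ i, Semiring (A i)] [∀ i, Algebra R (A i)] (t : (∀ i, A i) ⊗[R] (∀ i, A i)) (i : ι) :
    mul' R (∀ i, A i) t i = mul' R (A i) (map (proj i) (proj i) t) :=
  LinearMap.congr_fun (AlgHom.comp_mul' (Pi.evalAlgHom R A i)) t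

end LinearMap

namespace TensorProduct

variable {R : Type*} [CommSemiring R] {M N P Q : Type*}
  [AddCommMonoid M] [Module R M] [AddCommMonoid N] [Module R N]
  [AddCommMonoid P] [Module R P] [AddCommMonoid Q] [Module R Q]

lemma map_sum_left {ι : Type*} (s : Finset ι) (f : ι → M →ₗ[R] P) (g : N →ₗ[R] Q) :
    map (∑ i ∈ s, f i) g = ∑ i ∈ s, map (f i) g := by
  simp only [← mapBilinear_apply, map_sum, LinearMap.sum_apply]

lemma map_sum_right {ι : Type*} (s : Finset ι) (f : M →ₗ[R] P) (g : ι → N →ₗ[R] Q) :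
    map f (∑ i ∈ s, g i) = ∑ i ∈ s, map f (g i) := by
  simp only [← mapBilinear_apply, map_sum]

lemma lid_lTensor (f : M →ₗ[R] N) (t : R ⊗[R] M) :
    TensorProduct.lid R N (f.lTensor R t) = f (TensorProduct.lid R M t) := by
  induction t using TensorProduct.induction_on with
  | zero => simp
  | tmul r x => simp
  | add t t' ht ht' => simp only [map_add, ht, ht']

lemma rid_rTensor (f : M →ₗ[R] N) (t : M ⊗[R] R) :
    TensorProduct.rid R N (f.rTensor R t) = f (TensorProduct.rid R M t) := by
  induction t using TensorProduct.induction_on with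
  | zero => simp
  | tmul x r => simp
  | add t t' ht ht' => simp only [map_add, ht, ht']

variable {ι κ ν : Type*} {A : ι → Type*} {B : κ → Type*} {C : ν → Type*}

section Module

open LinearMap (proj single)

variable [∀ i, AddCommMonoid (A i)] [∀ i, Module R (A i)]
  [∀ j, AddCommMonoid (B j)] [∀ j, Module R (B j)]
  [∀ l, AddCommMonoid (C l)] [∀ l, Module R (C l)]

lemma sum_map_comp_map_eq_id [Fintype ι] [Fintype κ] {p : ∀ i, M →ₗ[R] A i}
    {s : ∀ i, A i →ₗ[R] M} {q : ∀ j, N →ₗ[R] B j} {r : ∀ j, B j →ₗ[R] N}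
    (hM : ∑ i, s i ∘ₗ p i = LinearMap.id) (hN : ∑ j, r j ∘ₗ q j = LinearMap.id) :
    ∑ x : ι × κ, map (s x.1) (r x.2) ∘ₗ map (p x.1) (q x.2) = LinearMap.id := by
  simp only [← map_comp, Fintype.sum_prod_type, ← map_sum_right, ← map_sum_left, hM, hN,
    map_id]

variable [DecidableEq ι] [DecidableEq κ] [DecidableEq ν]

lemma pi_ext [Fintype ι] [Fintype κ] {t t' : (∀ i, A i) ⊗[R] (∀ j, B j)}
    (h : ∀ i j, map (proj i) (proj j) t = map (proj i) (proj j) t') : t = t' :=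
  LinearMap.eq_of_sum_comp_eq_id
    (sum_map_comp_map_eq_id (LinearMap.sum_single_comp_proj A) (LinearMap.sum_single_comp_proj B))
    fun x => h x.1 x.2

lemma pi_ext₃ [Fintype ι] [Fintype κ] [Fintype ν]
    {t t' : (∀ i, A i) ⊗[R] ((∀ j, B j) ⊗[R] (∀ l, C l))}
    (h : ∀ i j l, map (proj i) (map (proj j) (proj l)) t = map (proj i) (map (proj j) (proj l)) t') :
    t = t' :=
  LinearMap.eq_of_sum_comp_eq_id
    (sum_map_comp_map_eq_id (LinearMap.sum_single_comp_proj A)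
      (sum_map_comp_map_eq_id (LinearMap.sum_single_comp_proj B) (LinearMap.sum_single_comp_proj C)))
    fun x => h x.1 x.2.1 x.2.2

lemma map_proj_map_single (i : ι) (j : κ) (u : A i ⊗[R] B j) :
    map (proj i) (proj j) (map (single R A i) (single R B j) u) = u := by
  rw [← LinearMap.comp_apply, ← map_comp, LinearMap.proj_comp_single_same,
    LinearMap.proj_comp_single_same, map_id, LinearMap.id_apply]

lemma map_proj_map_single_of_ne {i i' : ι} {j j' : κ} (h : i ≠ i' ∨ j ≠ j')
    (u : A i' ⊗[R] B j') :
    map (proj i) (proj j) (map (single R A i') (single R B j') u) = 0 := by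
  rw [← LinearMap.comp_apply, ← map_comp]
  rcases h with h | h
  · rw [LinearMap.proj_comp_single_ne _ _ _ _ h, map_zero_left, LinearMap.zero_apply]
  · rw [LinearMap.proj_comp_single_ne _ _ _ _ h, map_zero_right, LinearMap.zero_apply]

end Module

section Algebra

open LinearMap (proj)

variable [∀ i, Ring (A i)] [∀ i, Algebra R (A i)] [∀ j, Ring (B j)] [∀ j, Algebra R (B j)]

lemma map_proj_mul (i : ι) (j : κ) (x y : (∀ i, A i) ⊗[R] (∀ j, B j)) :
    map (proj i) (proj j) (x * y) = map (proj i) (proj j) x * map (proj i) (proj j) y :=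
  map_mul (Algebra.TensorProduct.map (Pi.evalAlgHom R A i) (Pi.evalAlgHom R B j)) x y

lemma map_proj_one (i : ι) (j : κ) :
    map (proj i) (proj j) (1 : (∀ i, A i) ⊗[R] (∀ j, B j)) = 1 :=
  map_one (Algebra.TensorProduct.map (Pi.evalAlgHom R A i) (Pi.evalAlgHom R B j))

end Algebra

end TensorProduct

section Lcast

variable {k : Type*} [CommSemiring k] {π : Type*} {H : π → Type*}
  [∀ α, AddCommMonoid (H α)] [∀ α, Module k (H α)]

lemma Lcast_apply_pi {α β : π} (h : α = β) (a : ∀ γ, H γ) : Lcast k H h (a α) = a β := by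
  subst h; rfl

lemma Pi.single_apply_eq_Lcast [DecidableEq π] {α β : π} (h : α = β) (x : H α) :
    Pi.single α x β = Lcast k H h x := by
  subst h; exact Pi.single_eq_same α x

end Lcast

namespace HopfGroupCoalgebra

open LinearMap (proj single)

variable {k : Type*} [Field k] {π : Type*} [Group π]
  {H : π → Type*} [∀ α, Ring (H α)] [∀ α, Algebra k (H α)] (Hc : HopfGroupCoalgebra k π H)

def totalCounit : (∀ α, H α) →ₗ[k] k := Hc.ε.toLinearMap ∘ₗ proj 1

def totalAntipode : (∀ α, H α) →ₗ[k] (∀ α, H α) :=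
  LinearMap.pi fun α => Lcast k H (inv_inv α) ∘ₗ Hc.S α⁻¹ ∘ₗ proj α⁻¹

variable [DecidableEq π]

lemma totalCounit_single (α : π) (x : H α) :
    Hc.totalCounit (Pi.single α x) = if h : α = 1 then Hc.ε (Lcast k H h x) else 0 := by
  split_ifs with h
  · subst h; exact congrArg Hc.ε (Pi.single_eq_same 1 x)
  · simp [totalCounit, Pi.single_eq_of_ne' h]

lemma totalAntipode_single (α : π) (x : H α) :
    Hc.totalAntipode (Pi.single α x) = Pi.single α⁻¹ (Hc.S α x) := by
  funext β
  by_cases h : β⁻¹ = α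
  · subst h
    rw [Pi.single_apply_eq_Lcast (k := k) (inv_inv β)]
    simp [totalAntipode]
  · have hβ : β ≠ α⁻¹ := fun h' => h (by rw [h', inv_inv])
    simp [totalAntipode, Pi.single_eq_of_ne h, Pi.single_eq_of_ne hβ]

variable [Fintype π]

noncomputable def totalComul : (∀ α, H α) →ₗ[k] (∀ α, H α) ⊗[k] (∀ α, H α) :=
  ∑ p : π × π, map (single k H p.1) (single k H p.2) ∘ₗ (Hc.Δ p.1 p.2).toLinearMap ∘ₗ
    proj (p.1 * p.2)

lemma totalComul_apply (a : ∀ α, H α) :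
    Hc.totalComul a = ∑ p : π × π,
      map (single k H p.1) (single k H p.2) (Hc.Δ p.1 p.2 (a (p.1 * p.2))) := by
  simp [totalComul, LinearMap.sum_apply]

lemma map_proj_totalComul (β γ : π) (a : ∀ α, H α) :
    map (proj β) (proj γ) (Hc.totalComul a) = Hc.Δ β γ (a (β * γ)) := by
  rw [totalComul_apply, map_sum, Finset.sum_eq_single (β, γ), map_proj_map_single]
  · rintro ⟨β', γ'⟩ - hne
    refine map_proj_map_single_of_ne ?_ _
    by_contra! h
    exact hne (Prod.ext h.1.symm h.2.symm)
  · simp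

lemma map_proj_comp_totalComul (β γ : π) :
    map (proj β) (proj γ) ∘ₗ Hc.totalComul = (Hc.Δ β γ).toLinearMap ∘ₗ proj (β * γ) :=
  LinearMap.ext (Hc.map_proj_totalComul β γ)

lemma totalComul_single (α : π) (x : H α) :
    Hc.totalComul (Pi.single α x) = ∑ β : π,
      map (single k H β) (single k H (β⁻¹ * α))
        (Hc.Δ β (β⁻¹ * α) (Lcast k H (mul_inv_cancel_left β α).symm x)) := by
  rw [totalComul_apply, Fintype.sum_prod_type]
  refine Finset.sum_congr rfl fun β _ => ?_
  rw [Finset.sum_eq_single (β⁻¹ * α), Pi.single_apply_eq_Lcast (k := k)]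
  · intro γ _ hγ
    rw [Pi.single_eq_of_ne (by rintro rfl; simp at hγ), map_zero, map_zero]
  · simp

lemma totalComul_coassoc (a : ∀ α, H α) :
    TensorProduct.assoc k _ _ _ (map Hc.totalComul LinearMap.id (Hc.totalComul a)) =
      map LinearMap.id Hc.totalComul (Hc.totalComul a) := by
  refine pi_ext₃ fun α β γ => ?_
  calc _ = TensorProduct.assoc k _ _ _
        (map (Hc.Δ α β).toLinearMap LinearMap.id (Hc.Δ (α * β) γ (a (α * β * γ)))) := by
        rw [map_map_assoc, map_map, map_proj_comp_totalComul, ← map_proj_totalComul, map_map,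
          LinearMap.comp_id, LinearMap.id_comp]
    _ = map LinearMap.id (Hc.Δ β γ).toLinearMap (Hc.Δ α (β * γ) (a (α * (β * γ)))) := by
        rw [Hc.coassoc, Lcast_apply_pi]
    _ = _ := by
        rw [map_map, map_proj_comp_totalComul, ← map_proj_totalComul, map_map,
          LinearMap.comp_id, LinearMap.id_comp]

lemma lid_map_totalCounit_totalComul (a : ∀ α, H α) :
    TensorProduct.lid k _ (map Hc.totalCounit LinearMap.id (Hc.totalComul a)) = a := by
  funext γ
  calc _ = TensorProduct.lid k _ ((proj γ).lTensor k
          (map Hc.totalCounit LinearMap.id (Hc.totalComul a))) := (lid_lTensor _ _).symm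
    _ = TensorProduct.lid k _ (map Hc.ε.toLinearMap LinearMap.id (Hc.Δ 1 γ (a (1 * γ)))) := by
        rw [← map_proj_totalComul, map_map, LinearMap.lTensor, map_map]
        rfl
    _ = a γ := by rw [Hc.counit_left, Lcast_apply_pi]

lemma rid_map_totalCounit_totalComul (a : ∀ α, H α) :
    TensorProduct.rid k _ (map LinearMap.id Hc.totalCounit (Hc.totalComul a)) = a := by
  funext β
  calc _ = TensorProduct.rid k _ ((proj β).rTensor k
          (map LinearMap.id Hc.totalCounit (Hc.totalComul a))) := (rid_rTensor _ _).symm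
    _ = TensorProduct.rid k _ (map LinearMap.id Hc.ε.toLinearMap (Hc.Δ β 1 (a (β * 1)))) := by
        rw [← map_proj_totalComul, map_map, LinearMap.rTensor, map_map]
        rfl
    _ = a β := by rw [Hc.counit_right, Lcast_apply_pi]

lemma totalComul_mul (a b : ∀ α, H α) :
    Hc.totalComul (a * b) = Hc.totalComul a * Hc.totalComul b :=
  pi_ext fun β γ => by
    rw [map_proj_mul, map_proj_totalComul, map_proj_totalComul, map_proj_totalComul, Pi.mul_apply,
      map_mul]

lemma totalComul_one : Hc.totalComul 1 = 1 :=
  pi_ext fun β γ => by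
    rw [map_proj_totalComul, Pi.one_apply, map_one, map_proj_one]

lemma mul'_map_totalAntipode_totalComul (a : ∀ α, H α) :
    LinearMap.mul' k _ (map Hc.totalAntipode LinearMap.id (Hc.totalComul a)) =
      Hc.totalCounit a • (1 : ∀ α, H α) := by
  funext α
  calc _ = LinearMap.mul' k (H α) (map (Lcast k H (inv_inv α) ∘ₗ Hc.S α⁻¹) LinearMap.id
          (Hc.Δ α⁻¹ α (a (α⁻¹ * α)))) := by
        rw [LinearMap.mul'_pi_apply, map_map, ← map_proj_totalComul, map_map]
        rfl
    _ = _ := by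
        rw [Hc.antipode_left, Lcast_apply_pi]
        rfl

lemma mul'_map_id_totalAntipode_totalComul (a : ∀ α, H α) :
    LinearMap.mul' k _ (map LinearMap.id Hc.totalAntipode (Hc.totalComul a)) =
      Hc.totalCounit a • (1 : ∀ α, H α) := by
  funext α
  calc _ = LinearMap.mul' k (H α) (map LinearMap.id (Lcast k H (inv_inv α) ∘ₗ Hc.S α⁻¹)
          (Hc.Δ α α⁻¹ (a (α * α⁻¹)))) := by
        rw [LinearMap.mul'_pi_apply, map_map, ← map_proj_totalComul, map_map]
        rfl
    _ = _ := by
        rw [Hc.antipode_right, Lcast_apply_pi]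
        rfl

end HopfGroupCoalgebra

/-- For a finite group `π`, a Hopf `π`-coalgebra `H` gives rise to a Hopf algebra structure
on `H̃ = ⊕_α H α` (realized as `∀ α, H α` with the pointwise, i.e. block-diagonal
`m̃|_{H α ⊗ H β} = δ_{α β} m_α`, ring structure and unit `1̃ = ∑_α 1_α`): there are a
comultiplication, counit and antipode given on the summands by `Δ̃|_{H α} = ∑_{βγ = α} Δ β γ`,
`ε̃|_{H α} = δ_{α 1} ε` and `S̃|_{H α} = S α`, satisfying all the axioms of a Hopf algebra. -/
theorem directSum_hopfAlgebra (k : Type*) [Field k] (π : Type*) [Group π]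
    [Fintype π] [DecidableEq π]
    (H : π → Type*) [∀ α, Ring (H α)] [∀ α, Algebra k (H α)]
    (Hc : HopfGroupCoalgebra k π H) :
    ∃ (comul : (∀ α, H α) →ₗ[k] TensorProduct k (∀ α, H α) (∀ α, H α))
      (counit : (∀ α, H α) →ₗ[k] k) (antipode : (∀ α, H α) →ₗ[k] (∀ α, H α)),
      -- the structure maps are the ones prescribed by the Hopf `π`-coalgebra:
      (∀ (α : π) (x : H α),
        comul (Pi.single α x) =
          ∑ β : π, (TensorProduct.map (LinearMap.single k H β) (LinearMap.single k H (β⁻¹ * α)))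
            (Hc.Δ β (β⁻¹ * α) (Lcast k H (mul_inv_cancel_left β α).symm x))) ∧
      (∀ (α : π) (x : H α),
        counit (Pi.single α x) = if h : α = 1 then Hc.ε (Lcast k H h x) else 0) ∧
      (∀ (α : π) (x : H α), antipode (Pi.single α x) = Pi.single α⁻¹ (Hc.S α x)) ∧
      -- coassociativity and counit axioms:
      (∀ a : ∀ α, H α,
        (TensorProduct.assoc k _ _ _) (TensorProduct.map comul LinearMap.id (comul a)) =
          TensorProduct.map LinearMap.id comul (comul a)) ∧
      (∀ a : ∀ α, H α,
        (TensorProduct.lid k _) (TensorProduct.map counit LinearMap.id (comul a)) = a) ∧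
      (∀ a : ∀ α, H α,
        (TensorProduct.rid k _) (TensorProduct.map LinearMap.id counit (comul a)) = a) ∧
      -- the comultiplication and counit are algebra homomorphisms:
      (∀ a b : ∀ α, H α, comul (a * b) = comul a * comul b) ∧
      (comul 1 = 1) ∧
      (∀ a b : ∀ α, H α, counit (a * b) = counit a * counit b) ∧
      (counit 1 = 1) ∧
      -- the antipode axioms:
      (∀ a : ∀ α, H α,
        (LinearMap.mul' k _) (TensorProduct.map antipode LinearMap.id (comul a)) =
          counit a • (1 : ∀ α, H α)) ∧
      (∀ a : ∀ α, H α,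
        (LinearMap.mul' k _) (TensorProduct.map LinearMap.id antipode (comul a)) =
          counit a • (1 : ∀ α, H α)) := by
  exact ⟨Hc.totalComul, Hc.totalCounit, Hc.totalAntipode, Hc.totalComul_single,
    Hc.totalCounit_single, Hc.totalAntipode_single, Hc.totalComul_coassoc,
    Hc.lid_map_totalCounit_totalComul, Hc.rid_map_totalCounit_totalComul, Hc.totalComul_mul,
    Hc.totalComul_one, fun a b => Hc.ε.map_mul (a 1) (b 1), Hc.ε.map_one,
    Hc.mul'_map_totalAntipode_totalComul, Hc.mul'_map_id_totalAntipode_totalComul⟩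
end

section
/- Let H = {H_α}_{α∈π} be a Hopf π-coalgebra and λ = (λ_α)_{α∈π} a non-zero left π-integral for H (meaning λ_β ≠ 0 for some β). Then λ_α ≠ 0 for every α ∈ π with H_α ≠ 0; in particular λ_1 ≠ 0. -/
open TensorProduct

/-- If `λ = (λ_α)` is a non-zero left `π`-integral for a Hopf `π`-coalgebra `H`
(i.e. `(id ⊗ λ_β) Δ_{α,β}(x) = λ_{αβ}(x) 1_α`, and `λ_β ≠ 0` for some `β`),
then `λ_α ≠ 0` for every `α` with `H α ≠ 0`; in particular `λ_1 ≠ 0`. -/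
theorem nonzero_left_integral (k : Type*) [Field k] (π : Type*) [Group π]
    (H : π → Type*) [∀ α, Ring (H α)] [∀ α, Algebra k (H α)]
    (Hc : HopfGroupCoalgebra k π H)
    (lam : ∀ α : π, H α →ₗ[k] k)
    (hint : ∀ (α β : π) (x : H (α * β)),
      (TensorProduct.rid k (H α))
          (TensorProduct.map LinearMap.id (lam β) (Hc.Δ α β x)) =
        lam (α * β) x • (1 : H α))
    (hnz : ∃ β : π, lam β ≠ 0) :
    (∀ α : π, Nontrivial (H α) → lam α ≠ 0) ∧ lam (1 : π) ≠ 0 := by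
  -- basic cast lemmas
  have lam_cast : ∀ {α β : π} (h : α = β) (x : H α),
      lam β (Lcast k H h x) = lam α x := by
    intro α β h x; subst h; rfl
  have cast_cast : ∀ {α β : π} (h : α = β) (y : H β),
      Lcast k H h (Lcast k H h.symm y) = y := by
    intro α β h y; subst h; rfl
  -- `H α` nontrivial implies `H α⁻¹` nontrivial, via the antipode axiom
  have inv_nontriv : ∀ α : π, Nontrivial (H α) → Nontrivial (H α⁻¹) := by
    intro α hα
    by_contra hn
    rw [not_nontrivial_iff_subsingleton] at hn
    have h := Hc.antipode_right α (Lcast k H (mul_inv_cancel α).symm 1)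
    have htens : (Hc.Δ α α⁻¹ (Lcast k H (mul_inv_cancel α).symm 1)) = 0 :=
      Subsingleton.elim _ _
    rw [htens, map_zero, map_zero, cast_cast, map_one, one_smul] at h
    exact one_ne_zero h.symm
  -- key step: if `λ_δ = 0` and `H α` nontrivial, then `λ_{αδ} = 0`
  have key : ∀ (α δ : π), Nontrivial (H α) → lam δ = 0 → lam (α * δ) = 0 := by
    intro α δ hα hδ
    ext x
    have h := hint α δ x
    rw [hδ] at h
    have : (TensorProduct.map LinearMap.id (0 : H δ →ₗ[k] k)
        (Hc.Δ α δ x)) = 0 := by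
      rw [show TensorProduct.map (LinearMap.id : H α →ₗ[k] H α) (0 : H δ →ₗ[k] k) = 0 by
        ext a b; simp]
      rfl
    rw [this, map_zero] at h
    have := (smul_eq_zero.mp h.symm).resolve_right one_ne_zero
    simpa using this
  obtain ⟨β, hβ⟩ := hnz
  have hHβ : Nontrivial (H β) := by
    by_contra hn
    rw [not_nontrivial_iff_subsingleton] at hn
    exact hβ (by ext x; rw [Subsingleton.elim x 0, map_zero]; rfl)
  -- λ_1 ≠ 0
  have h1 : lam (1 : π) ≠ 0 := by
    intro h0
    have := key β 1 hHβ h0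
    apply hβ
    ext x
    have := congrFun (congrArg DFunLike.coe this) (Lcast k H (mul_one β).symm x)
    rwa [lam_cast] at this
  refine ⟨?_, h1⟩
  intro α hα hα0
  have hinv : Nontrivial (H α⁻¹) := inv_nontriv α hα
  have := key α⁻¹ α hinv hα0
  apply h1
  ext x
  have := congrFun (congrArg DFunLike.coe this) (Lcast k H (inv_mul_cancel α).symm x)
  rwa [lam_cast] at this
end

section
/- Let H = {H_α}_{α∈π} be a finite type involutory Hopf π-coalgebra over a field k of characteristic p, and let α ∈ π with H_α ≠ 0. If p = 0 or p > |dim H_α − dim H_1|, then dim H_α = dim H_1. -/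
open TensorProduct

section
variable {k : Type*} [CommSemiring k] {π : Type*} {H : π → Type*}
  [∀ α, AddCommMonoid (H α)] [∀ α, Module k (H α)]

@[simp] theorem Lcast_self {a : π} (h : a = a) : Lcast k H h = LinearMap.id := rfl

theorem Lcast_Lcast_s11 {a b c : π} (h1 : a = b) (h2 : b = c) (x : H a) :
    Lcast k H h2 (Lcast k H h1 x) = Lcast k H (h1.trans h2) x := by subst h1; subst h2; rfl

def LcastEquiv (k : Type*) [CommSemiring k] {π : Type*} (H : π → Type*)
    [∀ α, AddCommMonoid (H α)] [∀ α, Module k (H α)] {a b : π} (h : a = b) :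
    H a ≃ₗ[k] H b := by subst h; exact LinearEquiv.refl k _

theorem LcastEquiv_apply {a b : π} (h : a = b) (x : H a) :
    LcastEquiv k H h x = Lcast k H h x := by subst h; rfl
end

namespace HopfGroupCoalgebra
variable {k : Type*} [Field k] {π : Type*} [Group π] {H : π → Type*}
  [∀ a, Ring (H a)] [∀ a, Algebra k (H a)] (Hc : HopfGroupCoalgebra k π H)

/-- Generalized left counit axiom, with the index `1` replaced by any `b = 1`. -/
theorem gen_counit_left (b s : π) (hb : b = 1) (hbs : b * s = s)
    (y : H (b * s)) :
    (TensorProduct.lid k (H s))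
      (TensorProduct.map (Hc.ε.toLinearMap ∘ₗ Lcast k H hb) LinearMap.id (Hc.Δ b s y)) =
      Lcast k H hbs y := by
  subst hb
  simpa using Hc.counit_left s y

/-- Generalized coassociativity, with `b * c` replaced by any `d = b * c`. -/
theorem gen_coassoc (a b c d : π) (hd : b * c = d)
    (had : a * b * c = a * d) (z : H (a * d)) :
    (TensorProduct.assoc k (H a) (H b) (H c))
        (TensorProduct.map (Hc.Δ a b).toLinearMap LinearMap.id
          (Hc.Δ (a * b) c (Lcast k H had.symm z))) =
      TensorProduct.map LinearMap.id ((Hc.Δ b c).toLinearMap ∘ₗ Lcast k H hd.symm)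
        (Hc.Δ a d z) := by
  subst hd
  have h := Hc.coassoc a b c (Lcast k H had.symm z)
  rw [Lcast_Lcast_s11] at h
  simpa using h

variable (α : π)

/-- The antipode `H α⁻¹ → H α` (composed with the canonical cast). -/
noncomputable def Smap : H α⁻¹ →ₗ[k] H α := (Lcast k H (inv_inv α)).comp (Hc.S α⁻¹)

/-- The Galois map `x ⊗ y ↦ x y₍₁₎ ⊗ y₍₂₎`. -/
noncomputable def Tmap : H α ⊗[k] H (α * (α⁻¹ * α)) →ₗ[k] H α ⊗[k] H (α⁻¹ * α) :=
  (LinearMap.rTensor (H (α⁻¹ * α)) (LinearMap.mul' k (H α))) ∘ₗ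
    (TensorProduct.assoc k (H α) (H α) (H (α⁻¹ * α))).symm.toLinearMap ∘ₗ
      (LinearMap.lTensor (H α) (Hc.Δ α (α⁻¹ * α)).toLinearMap)

/-- The inverse Galois map `u ⊗ v ↦ u S(v₍₁₎) ⊗ v₍₂₎`. -/
noncomputable def Umap : H α ⊗[k] H (α⁻¹ * α) →ₗ[k] H α ⊗[k] H α :=
  (LinearMap.rTensor (H α) (LinearMap.mul' k (H α))) ∘ₗ
    (TensorProduct.assoc k (H α) (H α) (H α)).symm.toLinearMap ∘ₗ
      (LinearMap.lTensor (H α)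
        ((TensorProduct.map (Smap Hc α) LinearMap.id) ∘ₗ (Hc.Δ α⁻¹ α).toLinearMap))

theorem Tmap_tmul (x : H α) (y : H (α * (α⁻¹ * α))) :
    Tmap Hc α (x ⊗ₜ y) =
      (LinearMap.rTensor (H (α⁻¹ * α)) (LinearMap.mul' k (H α)))
        ((TensorProduct.assoc k (H α) (H α) (H (α⁻¹ * α))).symm
          (x ⊗ₜ (Hc.Δ α (α⁻¹ * α) y))) := by
  simp [Tmap]

theorem Umap_tmul (u : H α) (v : H (α⁻¹ * α)) :
    Umap Hc α (u ⊗ₜ v) =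
      (LinearMap.rTensor (H α) (LinearMap.mul' k (H α)))
        ((TensorProduct.assoc k (H α) (H α) (H α)).symm
          (u ⊗ₜ (TensorProduct.map (Smap Hc α) LinearMap.id (Hc.Δ α⁻¹ α v)))) := by
  simp [Umap]

end HopfGroupCoalgebra

namespace HopfGroupCoalgebra
set_option maxHeartbeats 1000000
set_option synthInstance.maxHeartbeats 400000
variable {k : Type*} [Field k] {π : Type*} [Group π] {H : π → Type*}
  [∀ a, Ring (H a)] [∀ a, Algebra k (H a)] (Hc : HopfGroupCoalgebra k π H) (α : π)

/-- `x ⊗ (c ⊗ d) ↦ (x * (a * S c)) ⊗ d` helper. -/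
noncomputable def Psi (x : H α) : H α ⊗[k] (H α⁻¹ ⊗[k] H α) →ₗ[k] H α ⊗[k] H α :=
  (LinearMap.rTensor (H α) ((LinearMap.mulLeft k x) ∘ₗ LinearMap.mul' k (H α))) ∘ₗ
    (TensorProduct.assoc k (H α) (H α) (H α)).symm.toLinearMap ∘ₗ
      (LinearMap.lTensor (H α) (LinearMap.rTensor (H α) (Smap Hc α)))

@[simp] theorem Psi_tmul (x a : H α) (c : H α⁻¹) (d : H α) :
    Psi Hc α x (a ⊗ₜ (c ⊗ₜ d)) = (x * (a * Smap Hc α c)) ⊗ₜ d := by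
  simp [Psi]

theorem claimB (x : H α) (t : H α ⊗[k] H (α⁻¹ * α)) :
    Umap Hc α ((LinearMap.rTensor (H (α⁻¹ * α)) (LinearMap.mul' k (H α)))
        ((TensorProduct.assoc k (H α) (H α) (H (α⁻¹ * α))).symm (x ⊗ₜ t)))
      = Psi Hc α x (TensorProduct.map LinearMap.id (Hc.Δ α⁻¹ α).toLinearMap t) := by
  induction t using TensorProduct.induction_on with
  | zero => simp only [tmul_zero, map_zero]
  | tmul a b =>
      rw [assoc_symm_tmul, LinearMap.rTensor_tmul, LinearMap.mul'_apply, Umap_tmul,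
        map_tmul, LinearMap.id_coe, id_eq, AlgHom.toLinearMap_apply]
      generalize (Hc.Δ α⁻¹ α) b = w
      induction w using TensorProduct.induction_on with
      | zero => simp only [tmul_zero, map_zero]
      | tmul c d => simp [mul_assoc]
      | add w1 w2 h1 h2 => simp only [map_add, tmul_add, h1, h2]
  | add t1 t2 h1 h2 =>
      simp only [tmul_add, map_add, h1, h2]

end HopfGroupCoalgebra

namespace HopfGroupCoalgebra
set_option maxHeartbeats 1000000
set_option synthInstance.maxHeartbeats 400000
variable {k : Type*} [Field k] {π : Type*} [Group π] {H : π → Type*}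
  [∀ a, Ring (H a)] [∀ a, Algebra k (H a)] (Hc : HopfGroupCoalgebra k π H) (α : π)

/-- `z₁ ⊗ z₂ ↦ ε(z₁) • z₂`. -/
noncomputable def Emap : H (α * α⁻¹) ⊗[k] H α →ₗ[k] H α :=
  (TensorProduct.lid k (H α)).toLinearMap ∘ₗ
    TensorProduct.map (Hc.ε.toLinearMap ∘ₗ Lcast k H (mul_inv_cancel α)) LinearMap.id

theorem claimC' (x : H α) (z₂ : H α) (w : H α ⊗[k] H α⁻¹) :
    Psi Hc α x ((TensorProduct.assoc k (H α) (H α⁻¹) (H α)) (w ⊗ₜ z₂))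
      = (x * (LinearMap.mul' k (H α)) (TensorProduct.map LinearMap.id (Smap Hc α) w)) ⊗ₜ z₂ := by
  induction w using TensorProduct.induction_on with
  | zero => simp
  | tmul c d => simp [assoc_tmul]
  | add w1 w2 h1 h2 => simp only [add_tmul, map_add, h1, h2, mul_add]

theorem mu_antipode_right (z₁ : H (α * α⁻¹)) :
    (LinearMap.mul' k (H α))
        (TensorProduct.map LinearMap.id (Smap Hc α) (Hc.Δ α α⁻¹ z₁)) =
      Hc.ε (Lcast k H (mul_inv_cancel α) z₁) • (1 : H α) :=
  Hc.antipode_right α z₁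

theorem claimC (x : H α) (s : H (α * α⁻¹) ⊗[k] H α) :
    Psi Hc α x ((TensorProduct.assoc k (H α) (H α⁻¹) (H α))
        (TensorProduct.map (Hc.Δ α α⁻¹).toLinearMap LinearMap.id s))
      = x ⊗ₜ Emap Hc α s := by
  induction s using TensorProduct.induction_on with
  | zero => simp only [map_zero, tmul_zero]
  | tmul z₁ z₂ =>
      rw [map_tmul, LinearMap.id_coe, id_eq, AlgHom.toLinearMap_apply, claimC',
        mu_antipode_right, mul_smul_comm, mul_one, smul_tmul]
      simp [Emap]
  | add s1 s2 h1 h2 => simp only [map_add, tmul_add, h1, h2]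

theorem key1 (hm : α * (α⁻¹ * α) = α) (z : H α ⊗[k] H (α * (α⁻¹ * α))) :
    Umap Hc α (Tmap Hc α z) = TensorProduct.map LinearMap.id (Lcast k H hm) z := by
  induction z using TensorProduct.induction_on with
  | zero => simp only [map_zero]
  | tmul x y =>
      rw [Tmap_tmul, claimB]
      have hco := Hc.gen_coassoc α α⁻¹ α (α⁻¹ * α) rfl (mul_assoc α α⁻¹ α) y
      simp only [Lcast_self, LinearMap.comp_id] at hco
      rw [← hco, claimC]
      have hcu := Hc.gen_counit_left (α * α⁻¹) α (mul_inv_cancel α)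
        (by rw [mul_inv_cancel, one_mul]) (Lcast k H (mul_assoc α α⁻¹ α).symm y)
      have hE : Emap Hc α (Hc.Δ (α * α⁻¹) α (Lcast k H (mul_assoc α α⁻¹ α).symm y))
          = Lcast k H (by rw [mul_inv_cancel, one_mul] : α * α⁻¹ * α = α)
              (Lcast k H (mul_assoc α α⁻¹ α).symm y) := hcu
      rw [hE, Lcast_Lcast_s11, map_tmul]
      rfl
  | add z1 z2 h1 h2 => simp only [map_add, h1, h2]

end HopfGroupCoalgebra

namespace HopfGroupCoalgebra
set_option maxHeartbeats 1000000
set_option synthInstance.maxHeartbeats 400000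
variable {k : Type*} [Field k] {π : Type*} [Group π] {H : π → Type*}
  [∀ a, Ring (H a)] [∀ a, Algebra k (H a)] (Hc : HopfGroupCoalgebra k π H) (α : π)

noncomputable def Psi2 (u : H α) :
    H α⁻¹ ⊗[k] (H α ⊗[k] H (α⁻¹ * α)) →ₗ[k] H α ⊗[k] H (α⁻¹ * α) :=
  (LinearMap.rTensor (H (α⁻¹ * α)) ((LinearMap.mulLeft k u) ∘ₗ LinearMap.mul' k (H α))) ∘ₗ
    (TensorProduct.assoc k (H α) (H α) (H (α⁻¹ * α))).symm.toLinearMap ∘ₗ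
      (LinearMap.rTensor (H α ⊗[k] H (α⁻¹ * α)) (Smap Hc α))

@[simp] theorem Psi2_tmul (u : H α) (c : H α⁻¹) (w : H α) (z : H (α⁻¹ * α)) :
    Psi2 Hc α u (c ⊗ₜ (w ⊗ₜ z)) = (u * (Smap Hc α c * w)) ⊗ₜ z := by
  simp [Psi2]

theorem claimB2 (hm : α * (α⁻¹ * α) = α) (u : H α) (t : H α⁻¹ ⊗[k] H α) :
    Tmap Hc α (TensorProduct.map LinearMap.id (Lcast k H hm.symm)
      ((LinearMap.rTensor (H α) (LinearMap.mul' k (H α)))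
        ((TensorProduct.assoc k (H α) (H α) (H α)).symm
          (u ⊗ₜ (TensorProduct.map (Smap Hc α) LinearMap.id t)))))
      = Psi2 Hc α u (TensorProduct.map LinearMap.id
          ((Hc.Δ α (α⁻¹ * α)).toLinearMap ∘ₗ Lcast k H hm.symm) t) := by
  induction t using TensorProduct.induction_on with
  | zero => simp only [tmul_zero, map_zero]
  | tmul c d =>
      simp only [map_tmul, assoc_symm_tmul, LinearMap.rTensor_tmul, LinearMap.mul'_apply,
        LinearMap.id_coe, id_eq, LinearMap.comp_apply, AlgHom.toLinearMap_apply, Tmap_tmul]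
      generalize (Hc.Δ α (α⁻¹ * α)) (Lcast k H hm.symm d) = w
      induction w using TensorProduct.induction_on with
      | zero => simp only [tmul_zero, map_zero]
      | tmul w1 w2 => simp [mul_assoc]
      | add w1 w2 h1 h2 => simp only [map_add, tmul_add, h1, h2]
  | add t1 t2 h1 h2 => simp only [tmul_add, map_add, h1, h2]

noncomputable def E2map : H (α⁻¹ * α) ⊗[k] H (α⁻¹ * α) →ₗ[k] H (α⁻¹ * α) :=
  (TensorProduct.lid k (H (α⁻¹ * α))).toLinearMap ∘ₗ
    TensorProduct.map (Hc.ε.toLinearMap ∘ₗ Lcast k H (inv_mul_cancel α)) LinearMap.id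

theorem claimC2' (u : H α) (z₂ : H (α⁻¹ * α)) (w : H α⁻¹ ⊗[k] H α) :
    Psi2 Hc α u ((TensorProduct.assoc k (H α⁻¹) (H α) (H (α⁻¹ * α))) (w ⊗ₜ z₂))
      = (u * (LinearMap.mul' k (H α)) (TensorProduct.map (Smap Hc α) LinearMap.id w)) ⊗ₜ z₂ := by
  induction w using TensorProduct.induction_on with
  | zero => simp
  | tmul c d => simp [assoc_tmul]
  | add w1 w2 h1 h2 => simp only [add_tmul, map_add, h1, h2, mul_add]

theorem mu_antipode_left (z₁ : H (α⁻¹ * α)) :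
    (LinearMap.mul' k (H α))
        (TensorProduct.map (Smap Hc α) LinearMap.id (Hc.Δ α⁻¹ α z₁)) =
      Hc.ε (Lcast k H (inv_mul_cancel α) z₁) • (1 : H α) :=
  Hc.antipode_left α z₁

theorem claimC2 (u : H α) (s : H (α⁻¹ * α) ⊗[k] H (α⁻¹ * α)) :
    Psi2 Hc α u ((TensorProduct.assoc k (H α⁻¹) (H α) (H (α⁻¹ * α)))
        (TensorProduct.map (Hc.Δ α⁻¹ α).toLinearMap LinearMap.id s))
      = u ⊗ₜ E2map Hc α s := by
  induction s using TensorProduct.induction_on with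
  | zero => simp only [map_zero, tmul_zero]
  | tmul z₁ z₂ =>
      rw [map_tmul, LinearMap.id_coe, id_eq, AlgHom.toLinearMap_apply, claimC2',
        mu_antipode_left, mul_smul_comm, mul_one, smul_tmul]
      simp [E2map]
  | add s1 s2 h1 h2 => simp only [map_add, tmul_add, h1, h2]

theorem key2 (hm : α * (α⁻¹ * α) = α) (z : H α ⊗[k] H (α⁻¹ * α)) :
    Tmap Hc α (TensorProduct.map LinearMap.id (Lcast k H hm.symm) (Umap Hc α z)) = z := by
  induction z using TensorProduct.induction_on with
  | zero => simp only [map_zero]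
  | tmul u v =>
      have had : α⁻¹ * α * (α⁻¹ * α) = α⁻¹ * α := by rw [mul_assoc, hm]
      rw [Umap_tmul, claimB2 Hc α hm]
      have hco := Hc.gen_coassoc α⁻¹ α (α⁻¹ * α) α hm had v
      rw [← hco, claimC2]
      have hcu := Hc.gen_counit_left (α⁻¹ * α) (α⁻¹ * α) (inv_mul_cancel α)
        (by rw [inv_mul_cancel, one_mul]) (Lcast k H had.symm v)
      have hE : E2map Hc α (Hc.Δ (α⁻¹ * α) (α⁻¹ * α) (Lcast k H had.symm v))
          = Lcast k H (by rw [inv_mul_cancel, one_mul] :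
              α⁻¹ * α * (α⁻¹ * α) = α⁻¹ * α) (Lcast k H had.symm v) := hcu
      rw [hE, Lcast_Lcast_s11]
      rfl
  | add z1 z2 h1 h2 => simp only [map_add, h1, h2]

end HopfGroupCoalgebra

set_option maxHeartbeats 1000000
set_option synthInstance.maxHeartbeats 400000
set_option linter.unusedVariables false

/-- Let `H` be a finite type involutory Hopf `π`-coalgebra over a field `k` of
characteristic `p`, and `α ∈ π` with `H α ≠ 0`.  If `p = 0` or
`p > |dim H α - dim H 1|`, then `dim H α = dim H 1`. -/
theorem finrank_eq_of_involutory (k : Type*) [Field k] (π : Type*) [Group π]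
    (H : π → Type*) [∀ α, Ring (H α)] [∀ α, Algebra k (H α)]
    [∀ α, FiniteDimensional k (H α)]
    (Hc : HopfGroupCoalgebra k π H)
    (hinv : ∀ (α : π) (x : H α), Lcast k H (inv_inv α) (Hc.S α⁻¹ (Hc.S α x)) = x)
    (α : π) (hα : Nontrivial (H α))
    (hchar : ringChar k = 0 ∨
      ((Module.finrank k (H α) : ℤ) - (Module.finrank k (H 1) : ℤ)).natAbs < ringChar k) :
    Module.finrank k (H α) = Module.finrank k (H 1) := by
  
  haveI := hα
  have hm : α * (α⁻¹ * α) = α := by rw [inv_mul_cancel, mul_one]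
  have hUsurj : Function.Surjective (Hc.Umap α) := by
    intro w
    obtain ⟨z, hz⟩ : ∃ z, TensorProduct.map LinearMap.id (Lcast k H hm) z = w := by
      refine ⟨TensorProduct.map LinearMap.id (Lcast k H hm.symm) w, ?_⟩
      induction w using TensorProduct.induction_on with
      | zero => simp
      | tmul a b => simp [Lcast_Lcast_s11]
      | add a b h1 h2 => simp only [map_add, h1, h2]
    exact ⟨Hc.Tmap α z, by rw [Hc.key1 α hm z, hz]⟩
  have hUinj : Function.Injective (Hc.Umap α) :=
    Function.LeftInverse.injective
      (g := fun z => Hc.Tmap α (TensorProduct.map LinearMap.id (Lcast k H hm.symm) z))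
      (fun z => Hc.key2 α hm z)
  let e : (H α ⊗[k] H (α⁻¹ * α)) ≃ₗ[k] (H α ⊗[k] H α) :=
    LinearEquiv.ofBijective (Hc.Umap α) ⟨hUinj, hUsurj⟩
  have hfr := e.finrank_eq
  rw [Module.finrank_tensorProduct, Module.finrank_tensorProduct] at hfr
  have h12 : Module.finrank k (H (α⁻¹ * α)) = Module.finrank k (H 1) :=
    (LcastEquiv k H (inv_mul_cancel α)).finrank_eq
  rw [h12] at hfr
  have hpos : 0 < Module.finrank k (H α) := Module.finrank_pos
  exact (Nat.eq_of_mul_eq_mul_left hpos hfr).symm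
end
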